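/- arXiv:1401.1509 — 2 statements merged into one kernel-verified Lean document; each statement's English description precedes it below -/
import Mathlib

section
/- Let ω0 ≠ 0 and let N ∈ ℝ[q1, p1, q2, p2] be a polynomial satisfying N(q1, p1 + t·q1, cos(ω0 t)·q2 − sin(ω0 t)·p2, sin(ω0 t)·q2 + cos(ω0 t)·p2) = N(q1, p1, q2, p2) for all t ∈ ℝ and all (q1,p1,q2,p2) ∈ ℝ⁴. Then there is a polynomial Q in two variables with N(q1, p1, q2, p2) = Q(q1, q2² + p2²). -/
/-!
The time-`2π/ω0` map of the flow is the pure shear `p1 ↦ p1 + (2π/ω0) q1`, so for `q1 ≠ 0` the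
polynomial `N` is periodic, hence constant, in `p1`; by continuity it does not depend on `p1` at
all. The shear then drops out of the hypothesis, leaving invariance under every rotation of the
`(q2, p2)`-plane. Rotating `(q2, p2)` onto the ray through `(r, 0)`, `r = √(q2² + p2²)`, shows
`N = R(q1, r)` for the polynomial `R(a, b) = N(a, 0, b, 0)`, and the rotation by `π` makes `R`
even in `b`; an even polynomial in `b` is a polynomial in `b²`.
-/

open Finset MvPolynomial Real

theorem Polynomial.eq_C_eval_zero_of_periodic {R : Type*} [CommRing R] [IsDomain R] [CharZero R]
    {g : Polynomial R} {c : R} (hc : c ≠ 0) (hg : Function.Periodic g.eval c) :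
    g = Polynomial.C (g.eval 0) := by
  rw [← sub_eq_zero]
  refine Polynomial.eq_zero_of_infinite_isRoot _ <|
    Set.infinite_of_injective_forall_mem (f := fun n : ℕ => n * c)
      ((mul_left_injective₀ hc).comp Nat.cast_injective) fun n => ?_
  simp [(hg.nat_mul n).eq]

namespace MvPolynomial

variable {R σ : Type*} [CommRing R]

theorem exists_eval_eq_eval_add_smul (p : MvPolynomial σ R) (x v : σ → R) :
    ∃ g : Polynomial R, ∀ s, g.eval s = eval (x + s • v) p := by
  refine ⟨eval₂ Polynomial.C (fun i => Polynomial.C (x i) + Polynomial.C (v i) * Polynomial.X) p,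
    fun s => ?_⟩
  rw [polynomial_eval_eval₂,
    show (Polynomial.evalRingHom s).comp Polynomial.C = RingHom.id R by ext; simp]
  simp only [Polynomial.eval_add, Polynomial.eval_mul, Polynomial.eval_C, Polynomial.eval_X,
    eval₂_id]
  congr
  funext i
  simp [mul_comm]

theorem eval_add_smul_eq_of_periodic [IsDomain R] [CharZero R] (p : MvPolynomial σ R)
    (x v : σ → R) {c : R} (hc : c ≠ 0)
    (hp : Function.Periodic (fun s => eval (x + s • v) p) c) (s : R) :
    eval (x + s • v) p = eval x p := by
  obtain ⟨g, hg⟩ := p.exists_eval_eq_eval_add_smul x v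
  have hper : Function.Periodic g.eval c := fun s => by simpa only [hg] using hp s
  rw [← hg, Polynomial.eq_C_eval_zero_of_periodic hc hper, Polynomial.eval_C, hg, zero_smul,
    add_zero]

theorem eval_fin_two_eq_sum (p : MvPolynomial (Fin 2) R) (a b : R) :
    eval ![a, b] p = ∑ d ∈ p.support, coeff d p * (a ^ d 0 * b ^ d 1) := by
  simp [eval_eq', Fin.prod_univ_two]

theorem exists_eval_sq_of_eval_neg [NoZeroDivisors R] [CharZero R] (p : MvPolynomial (Fin 2) R)
    (hp : ∀ a b, eval ![a, -b] p = eval ![a, b] p) :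
    ∃ q : MvPolynomial (Fin 2) R, ∀ a b, eval ![a, b] p = eval ![a, b ^ 2] q := by
  set E := p.support.filter fun d => Even (d 1)
  set O := p.support.filter fun d => ¬Even (d 1)
  have hsplit : ∀ a b, eval ![a, b] p =
      ∑ d ∈ E, coeff d p * (a ^ d 0 * b ^ d 1) + ∑ d ∈ O, coeff d p * (a ^ d 0 * b ^ d 1) :=
    fun a b => by rw [eval_fin_two_eq_sum, sum_filter_add_sum_filter_not]
  have hodd : ∀ a b, ∑ d ∈ O, coeff d p * (a ^ d 0 * b ^ d 1) = 0 := by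
    intro a b
    have hE : ∑ d ∈ E, coeff d p * (a ^ d 0 * (-b) ^ d 1) =
        ∑ d ∈ E, coeff d p * (a ^ d 0 * b ^ d 1) :=
      sum_congr rfl fun d hd => by rw [(mem_filter.1 hd).2.neg_pow]
    have hO : ∑ d ∈ O, coeff d p * (a ^ d 0 * (-b) ^ d 1) =
        -∑ d ∈ O, coeff d p * (a ^ d 0 * b ^ d 1) := by
      rw [← sum_neg_distrib]
      refine sum_congr rfl fun d hd => ?_
      rw [(Nat.not_even_iff_odd.1 (mem_filter.1 hd).2).neg_pow]
      ring
    have := hp a b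
    rw [hsplit, hsplit, hE, hO, add_right_inj] at this
    exact CharZero.neg_eq_self_iff.1 this
  refine ⟨∑ d ∈ E, C (coeff d p) * X 0 ^ d 0 * X 1 ^ (d 1 / 2), fun a b => ?_⟩
  rw [hsplit, hodd, add_zero, map_sum]
  refine sum_congr rfl fun d hd => ?_
  simp only [map_mul, map_pow, eval_C, eval_X, Matrix.cons_val_zero, Matrix.cons_val_one,
    ← pow_mul, Nat.two_mul_div_two_of_even (mem_filter.1 hd).2, mul_assoc]

end MvPolynomial

theorem eval_eq_eval_zero_of_shear_invariant {N : MvPolynomial (Fin 4) ℝ} {c : ℝ} (hc : c ≠ 0)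
    (hN : ∀ q1 p1 q2 p2, eval ![q1, p1 + c * q1, q2, p2] N = eval ![q1, p1, q2, p2] N)
    (q1 p1 q2 p2 : ℝ) :
    eval ![q1, p1, q2, p2] N = eval ![q1, 0, q2, p2] N := by
  have hne : ∀ q1 ≠ 0, eval ![q1, p1, q2, p2] N = eval ![q1, 0, q2, p2] N := by
    intro q1 hq1
    simpa using N.eval_add_smul_eq_of_periodic ![q1, 0, q2, p2] ![0, 1, 0, 0]
      (mul_ne_zero hc hq1) (fun s => by simpa [add_assoc] using hN q1 s q2 p2) p1
  have hcont : ∀ p1 : ℝ, Continuous fun q1 : ℝ => eval ![q1, p1, q2, p2] N :=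
    fun p1 => (continuous_eval N).comp (by fun_prop)
  exact congrFun (Continuous.ext_on (dense_compl_singleton 0) (hcont p1) (hcont 0) hne) q1

theorem eval_eq_eval_sqrt_of_rotation_invariant {N : MvPolynomial (Fin 4) ℝ}
    (hN : ∀ θ q1 p1 q2 p2, eval ![q1, p1, cos θ * q2 - sin θ * p2, sin θ * q2 + cos θ * p2] N =
      eval ![q1, p1, q2, p2] N) (q1 p1 q2 p2 : ℝ) :
    eval ![q1, p1, q2, p2] N = eval ![q1, p1, √(q2 ^ 2 + p2 ^ 2), 0] N := by
  set z : ℂ := ⟨q2, p2⟩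
  have hz : ‖z‖ = √(q2 ^ 2 + p2 ^ 2) := by
    rw [Complex.norm_def, Complex.normSq_mk, sq, sq]
  have := hN z.arg q1 p1 ‖z‖ 0
  rw [mul_zero, mul_zero, sub_zero, add_zero, mul_comm, Complex.norm_mul_cos_arg, mul_comm,
    Complex.norm_mul_sin_arg] at this
  rw [← hz, ← this]

/-- Characterization of normal-form polynomials for the `0²iω` resonance: a real
polynomial in `(q1,p1,q2,p2)` invariant under the combined shear/rotation flow is a
polynomial in `q1` and `q2² + p2²`. -/
theorem resonance_invariant_polynomial (ω0 : ℝ) (hω : ω0 ≠ 0) (N : MvPolynomial (Fin 4) ℝ)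
    (h : ∀ (t q1 p1 q2 p2 : ℝ),
      MvPolynomial.eval
        ![q1, p1 + t * q1,
          Real.cos (ω0 * t) * q2 - Real.sin (ω0 * t) * p2,
          Real.sin (ω0 * t) * q2 + Real.cos (ω0 * t) * p2] N
      = MvPolynomial.eval ![q1, p1, q2, p2] N) :
    ∃ Q : MvPolynomial (Fin 2) ℝ, ∀ q1 p1 q2 p2 : ℝ,
      MvPolynomial.eval ![q1, p1, q2, p2] N
        = MvPolynomial.eval ![q1, q2 ^ 2 + p2 ^ 2] Q := by
  have hp1 := eval_eq_eval_zero_of_shear_invariant (by positivity : 2 * π / ω0 ≠ 0)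
    fun q1 p1 q2 p2 => by simpa [mul_div_cancel₀ _ hω] using h (2 * π / ω0) q1 p1 q2 p2
  have hrot : ∀ θ q1 p1 q2 p2,
      eval ![q1, p1, cos θ * q2 - sin θ * p2, sin θ * q2 + cos θ * p2] N =
        eval ![q1, p1, q2, p2] N := by
    intro θ q1 p1 q2 p2
    have := h (θ / ω0) q1 p1 q2 p2
    rw [mul_div_cancel₀ _ hω] at this
    rw [hp1, ← hp1 _ (p1 + θ / ω0 * q1), this]
  set R : MvPolynomial (Fin 2) ℝ := eval₂ C ![X 0, 0, X 1, 0] N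
  have hR : ∀ a b, eval ![a, b] R = eval ![a, 0, b, 0] N := fun a b => by
    rw [← eval_assoc, show eval ![a, b] ∘ ![X 0, 0, X 1, 0] = ![a, 0, b, 0] by
      ext i; fin_cases i <;> simp]
  obtain ⟨Q, hQ⟩ := R.exists_eval_sq_of_eval_neg fun a b => by
    simpa [hR] using hrot π a 0 b 0
  refine ⟨Q, fun q1 p1 q2 p2 => ?_⟩
  rw [eval_eq_eval_sqrt_of_rotation_invariant hrot, hp1, ← hR, hQ, sq_sqrt (by positivity)]
end

section
/- Let L0 : ℝ^m → ℝ^m be linear and let A be the operator on homogeneous polynomials of degree ℓ defined by (A S)(x) = DS(x)·(L0 x). Then with respect to the inner product ⟨S, S'⟩ = (S(∂_x)S')(0), the adjoint of A is given by (A* S)(x) = DS(x)·(L0ᵀ x), i.e. ⟨A S, S'⟩ = ⟨S, A* S'⟩ for all homogeneous polynomials S, S' of degree ℓ. -/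
open MvPolynomial

/-- Apply the differential monomial `∂^α` to a polynomial. -/
noncomputable def applyDerivs {m : ℕ} (α : Fin m →₀ ℕ) (P : MvPolynomial (Fin m) ℝ) :
    MvPolynomial (Fin m) ℝ :=
  (List.ofFn fun i : Fin m =>
      (((pderiv i).toLinearMap ^ (α i)) : Module.End ℝ (MvPolynomial (Fin m) ℝ))).foldl
    (fun Q op => op Q) P

/-- The pairing `⟨S, S'⟩ = (S(∂ₓ) S')(0)`. -/
noncomputable def diffPairing {m : ℕ} (S P : MvPolynomial (Fin m) ℝ) : ℝ :=
  ∑ α ∈ S.support, S.coeff α * MvPolynomial.eval 0 (applyDerivs α P)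

/-- The homological operator `(A S)(x) = DS(x)·(L x)`. -/
noncomputable def homOp {m : ℕ} (L : Matrix (Fin m) (Fin m) ℝ)
    (S : MvPolynomial (Fin m) ℝ) : MvPolynomial (Fin m) ℝ :=
  ∑ i, (∑ j, MvPolynomial.C (L i j) * MvPolynomial.X j) * MvPolynomial.pderiv i S


/-! In the monomial basis the pairing is diagonal, `⟨S, P⟩ = ∑ α, α! · S_α · P_α`, since
`(∂^α P)(0) = α! · P_α`. So it is symmetric, and multiplication by `X j` is adjoint to `∂_j`
because `(β + e_j)! = (β_j + 1) · β!`. Hence both sides equal `∑ i j, L i j · ⟨∂_i S, ∂_j S'⟩`. -/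

open Finset

section

variable {m : ℕ}

lemma coeff_pderiv_pow (i : Fin m) (k : ℕ) (β : Fin m →₀ ℕ) (P : MvPolynomial (Fin m) ℝ) :
    coeff β ((((pderiv i).toLinearMap ^ k) : Module.End ℝ (MvPolynomial (Fin m) ℝ)) P)
      = ((β i + k).descFactorial k : ℝ) * coeff (β + Finsupp.single i k) P := by
  induction k generalizing P with
  | zero => simp
  | succ k ih =>
    rw [pow_succ, Module.End.mul_apply, ih, Derivation.coeFn_coe, coeff_pderiv, add_assoc,
      ← Finsupp.single_add, Finsupp.add_apply, Finsupp.single_eq_same, ← add_assoc,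
      Nat.succ_descFactorial_succ]
    push_cast
    ring

lemma coeff_foldl_pow_pderiv (α : Fin m →₀ ℕ) (l : List (Fin m)) (hl : l.Nodup)
    (β : Fin m →₀ ℕ) (P : MvPolynomial (Fin m) ℝ) :
    coeff β (l.foldl (fun Q i => (((pderiv i).toLinearMap ^ α i) :
        Module.End ℝ (MvPolynomial (Fin m) ℝ)) Q) P)
      = (∏ i ∈ l.toFinset, ((β i + α i).descFactorial (α i) : ℝ))
          * coeff (β + ∑ i ∈ l.toFinset, Finsupp.single i (α i)) P := by
  induction l generalizing P with
  | nil => simp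
  | cons i l ih =>
    obtain ⟨hi, hl⟩ := List.nodup_cons.mp hl
    have hi' : i ∉ l.toFinset := by simpa using hi
    have hβ : (β + ∑ j ∈ l.toFinset, Finsupp.single j (α j)) i = β i := by
      simp [Finsupp.single_apply, hi]
    rw [List.foldl_cons, ih hl, coeff_pderiv_pow, hβ, List.toFinset_cons, prod_insert hi',
      sum_insert hi', add_comm (Finsupp.single i (α i)), ← add_assoc]
    ring

noncomputable def multiIndexFactorial (α : Fin m →₀ ℕ) : ℝ := ∏ i, ((α i).factorial : ℝ)

lemma multiIndexFactorial_add_single (α : Fin m →₀ ℕ) (j : Fin m) :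
    multiIndexFactorial (α + Finsupp.single j 1) = ((α j : ℝ) + 1) * multiIndexFactorial α := by
  have hfac (i : Fin m) : (((α + Finsupp.single j 1 : Fin m →₀ ℕ) i).factorial : ℝ)
      = (if j = i then (α j : ℝ) + 1 else 1) * (α i).factorial := by
    by_cases h : j = i
    · subst h; simp [Nat.factorial_succ]
    · simp [h]
  rw [multiIndexFactorial, multiIndexFactorial, Fintype.prod_congr _ _ hfac, prod_mul_distrib,
    prod_ite_eq, if_pos (mem_univ j)]

lemma eval_zero_applyDerivs (α : Fin m →₀ ℕ) (P : MvPolynomial (Fin m) ℝ) :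
    eval 0 (applyDerivs α P) = multiIndexFactorial α * coeff α P := by
  rw [eval_zero, constantCoeff_eq, applyDerivs, List.ofFn_eq_map, List.foldl_map,
    coeff_foldl_pow_pderiv α _ (List.nodup_finRange m), List.toFinset_finRange,
    Finsupp.univ_sum_single, zero_add]
  simp only [Finsupp.coe_zero, Pi.zero_apply, zero_add, Nat.descFactorial_self, multiIndexFactorial]

lemma diffPairing_eq_sum {S : MvPolynomial (Fin m) ℝ} {t : Finset (Fin m →₀ ℕ)}
    (ht : S.support ⊆ t) (P : MvPolynomial (Fin m) ℝ) :
    diffPairing S P = ∑ α ∈ t, multiIndexFactorial α * coeff α S * coeff α P := by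
  rw [diffPairing]
  refine sum_subset ht (fun α _ hα => ?_) |>.trans (sum_congr rfl fun α _ => ?_)
  · rw [notMem_support_iff.mp hα, zero_mul]
  · rw [eval_zero_applyDerivs]; ring

lemma diffPairing_comm (S P : MvPolynomial (Fin m) ℝ) : diffPairing S P = diffPairing P S := by
  rw [diffPairing_eq_sum subset_union_left,
    diffPairing_eq_sum (subset_union_right (s₁ := S.support))]
  exact sum_congr rfl fun α _ => by ring

lemma diffPairing_add_left (S T P : MvPolynomial (Fin m) ℝ) :
    diffPairing (S + T) P = diffPairing S P + diffPairing T P := by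
  rw [diffPairing_eq_sum support_add, diffPairing_eq_sum subset_union_left,
    diffPairing_eq_sum subset_union_right, ← sum_add_distrib]
  exact sum_congr rfl fun α _ => by rw [coeff_add]; ring

lemma diffPairing_smul_left (a : ℝ) (S P : MvPolynomial (Fin m) ℝ) :
    diffPairing (a • S) P = a * diffPairing S P := by
  rw [diffPairing_eq_sum support_smul, diffPairing_eq_sum subset_rfl, mul_sum]
  exact sum_congr rfl fun α _ => by rw [coeff_smul, smul_eq_mul]; ring

lemma diffPairing_sum_left {ι : Type*} (t : Finset ι) (S : ι → MvPolynomial (Fin m) ℝ)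
    (P : MvPolynomial (Fin m) ℝ) :
    diffPairing (∑ k ∈ t, S k) P = ∑ k ∈ t, diffPairing (S k) P :=
  map_sum (AddMonoidHom.mk' (diffPairing · P) (diffPairing_add_left · · P)) S t

lemma diffPairing_monomial_left (β : Fin m →₀ ℕ) (c : ℝ) (P : MvPolynomial (Fin m) ℝ) :
    diffPairing (monomial β c) P = multiIndexFactorial β * c * coeff β P := by
  rw [diffPairing_eq_sum support_monomial_subset, sum_singleton, coeff_monomial, if_pos rfl]

lemma diffPairing_X_mul (j : Fin m) (Q P : MvPolynomial (Fin m) ℝ) :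
    diffPairing (X j * Q) P = diffPairing Q (pderiv j P) := by
  induction Q using MvPolynomial.induction_on' with
  | add Q₁ Q₂ h₁ h₂ => rw [mul_add, diffPairing_add_left, diffPairing_add_left, h₁, h₂]
  | monomial β c =>
    rw [← pow_one (X j), ← monomial_single_add, diffPairing_monomial_left,
      diffPairing_monomial_left, coeff_pderiv, add_comm, multiIndexFactorial_add_single]
    ring

lemma homOp_eq_sum (L : Matrix (Fin m) (Fin m) ℝ) (S : MvPolynomial (Fin m) ℝ) :
    homOp L S = ∑ i, ∑ j, L i j • (X j * pderiv i S) := by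
  simp only [homOp, sum_mul, mul_assoc, smul_eq_C_mul]

lemma diffPairing_homOp_left (L : Matrix (Fin m) (Fin m) ℝ) (S P : MvPolynomial (Fin m) ℝ) :
    diffPairing (homOp L S) P = ∑ i, ∑ j, L i j * diffPairing (pderiv i S) (pderiv j P) := by
  simp only [homOp_eq_sum, diffPairing_sum_left, diffPairing_smul_left, diffPairing_X_mul]

end

theorem homOp_adjoint_general {m : ℕ} (L : Matrix (Fin m) (Fin m) ℝ)
    (S S' : MvPolynomial (Fin m) ℝ) :
    diffPairing (homOp L S) S' = diffPairing S (homOp L.transpose S') := by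
  rw [diffPairing_comm S, diffPairing_homOp_left, diffPairing_homOp_left, sum_comm]
  simp only [Matrix.transpose_apply, diffPairing_comm (pderiv _ S')]

/-- On homogeneous polynomials of degree `ℓ`, the adjoint of `S ↦ DS(x)·(L0 x)`
for the pairing `⟨S,S'⟩ = (S(∂ₓ)S')(0)` is `S ↦ DS(x)·(L0ᵀ x)`. -/
theorem homOp_adjoint {m ℓ : ℕ} (L : Matrix (Fin m) (Fin m) ℝ)
    (S S' : MvPolynomial (Fin m) ℝ)
    (hS : S.IsHomogeneous ℓ) (hS' : S'.IsHomogeneous ℓ) :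
    diffPairing (homOp L S) S' = diffPairing S (homOp L.transpose S') :=
  homOp_adjoint_general L S S'
end
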